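/- arXiv:2204.10829 — 2 statements merged into one kernel-verified Lean document; each statement's English description precedes it below -/
import Mathlib

section
/- Let D ∈ ℝ^{k×d}, let G = DᵀD have eigenvalues g₁,…,g_d ≥ 0, let λ > 0, σ² > 0, and set γ = Σ_{l=1}^{d} g_l/(λ + g_l). Let δμ ∈ ℝ^d, μ ∈ ℝ^d, r ∈ ℝ^k satisfy the two stationarity conditions σ² = (‖r − Dμ‖₂² + λ‖δμ‖₂²)/k and λ(‖δμ‖₂² + tr(σ²(G + λI_d)⁻¹)) = d·σ². Then λ‖δμ‖₂² = γσ² and ‖r − Dμ‖₂² = (k − γ)σ²; equivalently, λ‖δμ‖₂²/γ = ‖r − Dμ‖₂²/(k − γ) = σ². -/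
/-!
Diagonalising `G`, the trace term is `σ² Σ_l 1/(g_l + λ)`, and `Σ_l λ/(g_l + λ) = d - γ` because
each summand complements `g_l/(g_l + λ)` to `1`. So the second condition says exactly
`λ‖δμ‖² = γσ²`, and substituting this into `kσ² = ‖r - Dμ‖² + λ‖δμ‖²` gives the other identity.
-/

open Matrix

namespace Matrix.IsHermitian

variable {n 𝕜 : Type*} [Fintype n] [DecidableEq n] [RCLike 𝕜] {A : Matrix n n 𝕜}

lemma trace_cfc (hA : A.IsHermitian) (f : ℝ → ℝ) :
    (cfc f A).trace = ∑ i, (f (hA.eigenvalues i) : 𝕜) := by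
  have hU : star (hA.eigenvectorUnitary : Matrix n n 𝕜) * hA.eigenvectorUnitary = 1 :=
    Unitary.star_mul_self_of_mem hA.eigenvectorUnitary.2
  rw [hA.cfc_eq, IsHermitian.cfc, Unitary.conjStarAlgAut_apply, trace_mul_cycle, hU, one_mul,
    trace_diagonal]
  rfl

lemma inv_add_smul_one_eq_cfc (hA : A.IsHermitian) {c : ℝ}
    (hc : ∀ i, hA.eigenvalues i + c ≠ 0) :
    (A + c • (1 : Matrix n n 𝕜))⁻¹ = cfc (fun x ↦ (x + c)⁻¹) A := by
  have hspec : ∀ x ∈ spectrum ℝ A, x + c ≠ 0 := by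
    rw [hA.spectrum_real_eq_range_eigenvalues]
    rintro - ⟨i, rfl⟩
    exact hc i
  rw [cfc_inv (fun x ↦ x + c) A hspec, cfc_add_const c (fun x ↦ x) A, cfc_id' ℝ A,
    Algebra.algebraMap_eq_smul_one, nonsing_inv_eq_ringInverse]

lemma trace_inv_add_smul_one (hA : A.IsHermitian) {c : ℝ}
    (hc : ∀ i, hA.eigenvalues i + c ≠ 0) :
    (A + c • (1 : Matrix n n 𝕜))⁻¹.trace = ∑ i, ((hA.eigenvalues i + c)⁻¹ : 𝕜) := by
  rw [hA.inv_add_smul_one_eq_cfc hc, hA.trace_cfc]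
  push_cast
  rfl

end Matrix.IsHermitian

lemma sum_div_add_add_mul_sum_inv_add {ι : Type*} [Fintype ι] (g : ι → ℝ) {c : ℝ}
    (hc : ∀ i, g i + c ≠ 0) :
    ∑ i, g i / (g i + c) + c * ∑ i, (g i + c)⁻¹ = Fintype.card ι := by
  rw [Finset.mul_sum, ← Finset.sum_add_distrib, ← Finset.card_univ, Finset.card_eq_sum_ones,
    Nat.cast_sum]
  refine Finset.sum_congr rfl fun i _ ↦ ?_
  field_simp [hc i]
  simp

theorem stationarity_conditions_split_general
    {k d : ℕ} (hk : 0 < k)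
    (D : Matrix (Fin k) (Fin d) ℝ)
    (G : Matrix (Fin d) (Fin d) ℝ) (hG : G.PosSemidef)
    (g : Fin d → ℝ) (hg : g = hG.isHermitian.eigenvalues)
    (lam σsq : ℝ) (hlam : 0 < lam)
    (γ : ℝ) (hγ : γ = ∑ l, g l / (lam + g l))
    (δμ μ : Fin d → ℝ) (r : Fin k → ℝ)
    (hstat1 : σsq = ((r - D *ᵥ μ) ⬝ᵥ (r - D *ᵥ μ) + lam * (δμ ⬝ᵥ δμ)) / k)
    (hstat2 : lam * (δμ ⬝ᵥ δμ
        + Matrix.trace (σsq • (G + lam • (1 : Matrix (Fin d) (Fin d) ℝ))⁻¹))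
      = d * σsq) :
    lam * (δμ ⬝ᵥ δμ) = γ * σsq ∧
    (r - D *ᵥ μ) ⬝ᵥ (r - D *ᵥ μ) = (k - γ) * σsq := by
  have hpos : ∀ l, g l + lam ≠ 0 := fun l ↦ by
    have := hG.eigenvalues_nonneg l
    subst hg
    linarith
  have htrace := hG.isHermitian.trace_inv_add_smul_one (𝕜 := ℝ) (hg ▸ hpos)
  simp only [← hg, RCLike.ofReal_real_eq_id, id] at htrace
  have hsplit := sum_div_add_add_mul_sum_inv_add g hpos
  simp only [add_comm lam] at hγ
  rw [Fintype.card_fin, ← hγ] at hsplit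
  rw [trace_smul, htrace, smul_eq_mul] at hstat2
  have hk' : (k : ℝ) ≠ 0 := by positivity
  rw [eq_div_iff hk'] at hstat1
  have hδμ : lam * (δμ ⬝ᵥ δμ) = γ * σsq := by linear_combination hstat2 - σsq * hsplit
  exact ⟨hδμ, by linear_combination -hstat1 - hδμ⟩

/-- If `σ² = (‖r − Dμ‖₂² + λ‖δμ‖₂²)/k` and
`λ(‖δμ‖₂² + tr(σ²(G + λI_d)⁻¹)) = d·σ²` (the two stationarity conditions of the log
marginal likelihood), where `G = DᵀD` has eigenvalues `g₁,…,g_d` and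
`γ = Σ_l g_l/(λ + g_l)`, then `λ‖δμ‖₂² = γσ²` and `‖r − Dμ‖₂² = (k − γ)σ²`. -/
theorem stationarity_conditions_split
    {k d : ℕ} (hk : 0 < k) (hd : 0 < d)
    (D : Matrix (Fin k) (Fin d) ℝ)
    (G : Matrix (Fin d) (Fin d) ℝ) (hGdef : G = Dᵀ * D) (hG : G.PosSemidef)
    (g : Fin d → ℝ) (hg : g = hG.isHermitian.eigenvalues)
    (lam σsq : ℝ) (hlam : 0 < lam) (hσsq : 0 < σsq)
    (γ : ℝ) (hγ : γ = ∑ l, g l / (lam + g l))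
    (δμ μ : Fin d → ℝ) (r : Fin k → ℝ)
    (hstat1 : σsq = ((r - D *ᵥ μ) ⬝ᵥ (r - D *ᵥ μ) + lam * (δμ ⬝ᵥ δμ)) / k)
    (hstat2 : lam * (δμ ⬝ᵥ δμ
        + Matrix.trace (σsq • (G + lam • (1 : Matrix (Fin d) (Fin d) ℝ))⁻¹))
      = d * σsq) :
    lam * (δμ ⬝ᵥ δμ) = γ * σsq ∧
    (r - D *ᵥ μ) ⬝ᵥ (r - D *ᵥ μ) = (k - γ) * σsq :=
  stationarity_conditions_split_general hk D G hG g hg lam σsq hlam γ hγ δμ μ r hstat1 hstat2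
end

section
/- Let D ∈ ℝ^{k×d}, r ∈ ℝ^k, β ∈ ℝ^d, let Λ = diag(λ₁,…,λ_d) with all λ_j > 0, and let K ∈ ℝ^{k×k} be symmetric positive definite. Define δμ_K = (Λ + DᵀK⁻¹D)⁻¹ Dᵀ K⁻¹ (r − Dβ) and μ_K = β + δμ_K. Then (r − Dβ)ᵀ (DΛ⁻¹Dᵀ + K)⁻¹ (r − Dβ) = (r − Dμ_K)ᵀ K⁻¹ (r − Dμ_K) + (δμ_K)ᵀ Λ (δμ_K). -/
open Matrix

/-- Generalized quadratic-form split: with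
`δμ_K = (Λ + DᵀK⁻¹D)⁻¹ Dᵀ K⁻¹ (r − Dβ)` and `μ_K = β + δμ_K`,
`(r − Dβ)ᵀ(DΛ⁻¹Dᵀ + K)⁻¹(r − Dβ) = (r − Dμ_K)ᵀK⁻¹(r − Dμ_K) + (δμ_K)ᵀΛ(δμ_K)`. -/
theorem generalized_quadratic_form_split
    {k d : ℕ} (hk : 0 < k) (hd : 0 < d)
    (D : Matrix (Fin k) (Fin d) ℝ) (r : Fin k → ℝ) (β : Fin d → ℝ)
    (lam : Fin d → ℝ) (hlam : ∀ j, 0 < lam j)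
    (Λ : Matrix (Fin d) (Fin d) ℝ) (hΛ : Λ = Matrix.diagonal lam)
    (K : Matrix (Fin k) (Fin k) ℝ) (hK : K.PosDef) (hKsymm : Kᵀ = K)
    (δμK μK : Fin d → ℝ)
    (hδμK : δμK = (Λ + Dᵀ * K⁻¹ * D)⁻¹ *ᵥ (Dᵀ *ᵥ (K⁻¹ *ᵥ (r - D *ᵥ β))))
    (hμK : μK = β + δμK) :
    (r - D *ᵥ β) ⬝ᵥ ((D * Λ⁻¹ * Dᵀ + K)⁻¹ *ᵥ (r - D *ᵥ β))
      = (r - D *ᵥ μK) ⬝ᵥ (K⁻¹ *ᵥ (r - D *ᵥ μK)) + δμK ⬝ᵥ (Λ *ᵥ δμK) := by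
  set e : Fin k → ℝ := r - D *ᵥ β with he
  set M : Matrix (Fin d) (Fin d) ℝ := Λ + Dᵀ * K⁻¹ * D with hMdef
  have hΛpd : Λ.PosDef := by
    rw [hΛ]; exact posDef_diagonal_iff.mpr fun i => hlam i
  have hKi : K⁻¹.PosDef := hK.inv
  have hDKD : (Dᵀ * K⁻¹ * D).PosSemidef := by
    have := hKi.posSemidef.conjTranspose_mul_mul_same D
    rwa [conjTranspose_eq_transpose_of_trivial] at this
  have hMpd : M.PosDef := hΛpd.add_posSemidef hDKD
  have hKiT : (K⁻¹)ᵀ = K⁻¹ := by rw [transpose_nonsing_inv, hKsymm]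
  have hKK : K * K⁻¹ = 1 := mul_nonsing_inv K hK.det_pos.ne'.isUnit
  have hΛΛ : Λ⁻¹ * Λ = 1 := nonsing_inv_mul Λ hΛpd.det_pos.ne'.isUnit
  have hMM : M * M⁻¹ = 1 := mul_nonsing_inv M hMpd.det_pos.ne'.isUnit
  -- Woodbury
  have hAKD : (D * Λ⁻¹ * Dᵀ + K) * K⁻¹ * D = D * Λ⁻¹ * M := by
    calc (D * Λ⁻¹ * Dᵀ + K) * K⁻¹ * D
        = D * Λ⁻¹ * (Dᵀ * K⁻¹ * D) + K * K⁻¹ * D := by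
          simp only [Matrix.add_mul, Matrix.mul_assoc]
      _ = D * Λ⁻¹ * (Dᵀ * K⁻¹ * D) + D * (Λ⁻¹ * Λ) := by
          rw [hKK, Matrix.one_mul, hΛΛ, Matrix.mul_one]
      _ = D * Λ⁻¹ * M := by
          rw [hMdef]
          simp only [Matrix.mul_add, ← Matrix.mul_assoc]
          abel
  have hW : (D * Λ⁻¹ * Dᵀ + K)⁻¹ = K⁻¹ - K⁻¹ * D * M⁻¹ * Dᵀ * K⁻¹ := by
    apply inv_eq_right_inv
    have h1 : (D * Λ⁻¹ * Dᵀ + K) * (K⁻¹ - K⁻¹ * D * M⁻¹ * Dᵀ * K⁻¹)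
        = (D * Λ⁻¹ * Dᵀ + K) * K⁻¹
          - (D * Λ⁻¹ * Dᵀ + K) * K⁻¹ * D * M⁻¹ * Dᵀ * K⁻¹ := by
      rw [Matrix.mul_sub]; simp only [Matrix.mul_assoc]
    rw [h1, hAKD, show D * Λ⁻¹ * M * M⁻¹ * Dᵀ * K⁻¹ = D * Λ⁻¹ * (M * M⁻¹) * (Dᵀ * K⁻¹) by
      simp only [Matrix.mul_assoc], hMM, Matrix.mul_one, Matrix.add_mul, hKK,
      ← Matrix.mul_assoc]
    abel
  have hMδ : M *ᵥ δμK = Dᵀ *ᵥ (K⁻¹ *ᵥ e) := by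
    rw [hδμK, mulVec_mulVec, hMM, one_mulVec]
  have hsym : ∀ v : Fin k → ℝ, (D *ᵥ δμK) ⬝ᵥ (K⁻¹ *ᵥ v) = v ⬝ᵥ (K⁻¹ *ᵥ (D *ᵥ δμK)) := by
    intro v
    rw [dotProduct_mulVec, ← mulVec_transpose, hKiT, dotProduct_comm]
  have hrD : r - D *ᵥ μK = e - D *ᵥ δμK := by
    rw [hμK, mulVec_add, he]; abel
  have hb : δμK ⬝ᵥ (M *ᵥ δμK) = e ⬝ᵥ (K⁻¹ *ᵥ (D *ᵥ δμK)) := by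
    rw [hMδ, dotProduct_mulVec, ← mulVec_transpose, transpose_transpose, ← hsym e]
  have hMsplit : δμK ⬝ᵥ (M *ᵥ δμK)
      = (D *ᵥ δμK) ⬝ᵥ (K⁻¹ *ᵥ (D *ᵥ δμK)) + δμK ⬝ᵥ (Λ *ᵥ δμK) := by
    rw [hMdef, add_mulVec, dotProduct_add, add_comm]
    congr 1
    rw [← mulVec_mulVec, ← mulVec_mulVec, dotProduct_mulVec (A := Dᵀ), vecMul_transpose]
  have hRHS : (r - D *ᵥ μK) ⬝ᵥ (K⁻¹ *ᵥ (r - D *ᵥ μK)) + δμK ⬝ᵥ (Λ *ᵥ δμK)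
      = e ⬝ᵥ (K⁻¹ *ᵥ e) - e ⬝ᵥ (K⁻¹ *ᵥ (D *ᵥ δμK)) := by
    rw [hrD, mulVec_sub, sub_dotProduct, dotProduct_sub, dotProduct_sub, hsym e]
    have h2 : (D *ᵥ δμK) ⬝ᵥ (K⁻¹ *ᵥ (D *ᵥ δμK)) + δμK ⬝ᵥ (Λ *ᵥ δμK)
        = e ⬝ᵥ (K⁻¹ *ᵥ (D *ᵥ δμK)) := by rw [← hMsplit, hb]
    linarith [h2]
  have hLHS : e ⬝ᵥ ((D * Λ⁻¹ * Dᵀ + K)⁻¹ *ᵥ e)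
      = e ⬝ᵥ (K⁻¹ *ᵥ e) - e ⬝ᵥ (K⁻¹ *ᵥ (D *ᵥ δμK)) := by
    rw [hW, sub_mulVec, dotProduct_sub, hδμK]
    simp only [mulVec_mulVec, Matrix.mul_assoc]
  rw [hLHS, hRHS]
end
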